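/- A tree name v̄ ∈ N^n is fixed by the dendriform involution (v̄ = v̄†) if and only if there exists a unique tree name w̄ with v̄ = w̄ ∨ w̄†; consequently the set of involution-fixed tree names in N^{2n} is empty and the set in N^{2n+1} has cardinality equal to the Catalan number C(n). -/

import Mathlib

/-- Planar rooted binary trees. -/
inductive PB : Type
  | leaf : PB
  | node : PB → PB → PB
  deriving DecidableEq

namespace PB

/-- The name (vector encoding) of a planar binary tree. -/
def name : PB → List ℕ
  | leaf => []
  | node l r => name l ++ [1] ++ (name r).map (fun x => x + (name l).length + 1)

/-- Number of internal (trivalent) vertices. -/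
def nodes : PB → ℕ
  | leaf => 0
  | node l r => nodes l + nodes r + 1

/-- Mirror image of a tree. -/
def mirror : PB → PB
  | leaf => leaf
  | node l r => node (mirror r) (mirror l)

/-- Left subtree. -/
def left : PB → PB
  | leaf => leaf
  | node l _ => l

/-- Right subtree. -/
def right : PB → PB
  | leaf => leaf
  | node _ r => r

end PB

/-- Grafting on vectors: v ∨ w = (v, 1, w + (len v + 1)). -/
def graft (v w : List ℕ) : List ℕ := v ++ [1] ++ w.map (fun x => x + v.length + 1)

/-- A list is a tree name if it is the name of some planar binary tree. -/
def TreeName (v : List ℕ) : Prop := ∃ t : PB, PB.name t = v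

/-- Componentwise order on vectors (of the same length). -/
def vle (v w : List ℕ) : Prop := List.Forall₂ (· ≤ ·) v w

/-- Strict componentwise order. -/
def vlt (v w : List ℕ) : Prop := vle v w ∧ v ≠ w

/-- k ▷ w : shift all coordinates ≠ 1 by k, fix coordinates equal to 1. -/
def rsh (k : ℕ) (w : List ℕ) : List ℕ := w.map (fun x => if x = 1 then 1 else x + k)

/-- The over operation on tree names: v ↗ w = (v, len v ▷ w). -/
def overN (v w : List ℕ) : List ℕ := v ++ rsh v.length w

/-- The under operation on tree names: v ↖ w = (v, len v + w). -/
def under (v w : List ℕ) : List ℕ := v ++ w.map (fun x => x + v.length)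

/-- Componentwise interval of lists. -/
def listIcc : List ℕ → List ℕ → Finset (List ℕ)
  | a :: as, b :: bs => ((Finset.Icc a b) ×ˢ listIcc as bs).image fun p => p.1 :: p.2
  | _, _ => {[]}

open Classical in
/-- Componentwise interval of tree names. -/
noncomputable def treeIcc (a b : List ℕ) : Finset (List ℕ) :=
  (listIcc a b).filter TreeName

/-- Dendriform addition of tree names: all tree names t with v ↗ w ≤ t ≤ v ↖ w. -/
noncomputable def dplus (v w : List ℕ) : Finset (List ℕ) :=
  treeIcc (overN v w) (under v w)

open Classical in
/-- The tree with a given name. -/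
noncomputable def treeOf (v : List ℕ) : PB :=
  if h : ∃ t : PB, PB.name t = v then h.choose else PB.leaf

/-- The dendriform involution on tree names (mirror image of the tree). -/
noncomputable def dag (v : List ℕ) : List ℕ := PB.name (PB.mirror (treeOf v))

/-- The name of the left subtree of (the tree of) a name. -/
noncomputable def leftN (v : List ℕ) : List ℕ := PB.name (treeOf v).left

/-- The name of the right subtree of (the tree of) a name. -/
noncomputable def rightN (v : List ℕ) : List ℕ := PB.name (treeOf v).right

/-! A self-mirror tree with at least one vertex is `node s s.mirror` for its left subtree `s`, so it
has `2 * s.nodes + 1` vertices; hence there are none of even positive size, and those of size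
`2n + 1` are in bijection with the trees of size `n`, counted by Catalan numbers. This transfers to tree names because
`PB.name` is injective: the name of a tree is the name of its left subtree, then a `1`, then the
shifted name of the right subtree, which contains no `1`, so the last `1` marks the root. -/

lemma List.append_cons_inj_of_notMem_right {α : Type*} {x₁ x₂ z₁ z₂ : List α} {a : α}
    (h₁ : a ∉ z₁) (h₂ : a ∉ z₂) :
    x₁ ++ a :: z₁ = x₂ ++ a :: z₂ ↔ x₁ = x₂ ∧ z₁ = z₂ := by
  constructor
  · simp only [List.append_eq_append_iff, List.cons_eq_append_iff, List.cons_eq_cons]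
    rintro (⟨c, rfl, ⟨rfl, -, rfl⟩ | ⟨d, rfl, rfl⟩⟩ | ⟨c, rfl, ⟨rfl, -, rfl⟩ | ⟨d, rfl, rfl⟩⟩) <;>
      simp_all
  · rintro ⟨rfl, rfl⟩
    rfl

namespace PB

lemma one_le_of_mem_name : ∀ {t : PB} {x : ℕ}, x ∈ t.name → 1 ≤ x
  | leaf, _, h => by simp [name] at h
  | node l r, x, h => by
    simp only [name, List.mem_append, List.mem_map, List.mem_singleton] at h
    rcases h with (h | rfl) | ⟨y, -, rfl⟩
    · exact one_le_of_mem_name h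
    · rfl
    · omega

lemma name_node (l r : PB) :
    (node l r).name = l.name ++ 1 :: r.name.map (· + l.name.length + 1) := by
  simp [name]

lemma one_notMem_shifted_name (r : PB) (k : ℕ) : 1 ∉ r.name.map (· + k + 1) := by
  simp only [List.mem_map, not_exists, not_and]
  intro y hy
  have := one_le_of_mem_name hy
  omega

theorem name_injective : Function.Injective name := by
  intro t s h
  induction t generalizing s with
  | leaf => cases s <;> simp_all [name]
  | node l r ihl ihr =>
    cases s with
    | leaf => simp [name] at h
    | node l' r' =>
      rw [name_node, name_node, List.append_cons_inj_of_notMem_right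
        (one_notMem_shifted_name _ _) (one_notMem_shifted_name _ _)] at h
      obtain ⟨hl, hr⟩ := h
      rw [hl] at hr
      rw [ihl hl, ihr (List.map_injective_iff.mpr (fun a b hab => by simpa using hab) hr)]

@[simp]
lemma mirror_mirror (t : PB) : t.mirror.mirror = t := by
  induction t with
  | leaf => rfl
  | node l r ihl ihr => simp [mirror, ihl, ihr]

lemma nodes_mirror (t : PB) : t.mirror.nodes = t.nodes := by
  induction t with
  | leaf => rfl
  | node l r ihl ihr => simp only [mirror, nodes, ihl, ihr]; omega

lemma length_name (t : PB) : t.name.length = t.nodes := by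
  induction t with
  | leaf => rfl
  | node l r ihl ihr => simp [name, nodes, ihl, ihr]; omega

lemma nodes_node_mirror (s : PB) : (node s s.mirror).nodes = 2 * s.nodes + 1 := by
  simp only [nodes, nodes_mirror]; omega

lemma mirror_node_mirror (s : PB) : (node s s.mirror).mirror = node s s.mirror := by
  simp [mirror]

lemma eq_node_left_mirror_of_mirror_eq {t : PB} (h : t.mirror = t) :
    t = leaf ∨ t = node t.left t.left.mirror := by
  cases t with
  | leaf => exact .inl rfl
  | node l r =>
    simp only [mirror, node.injEq] at h
    exact .inr (by simp [left, ← h.2])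

lemma mirror_eq_self_iff_existsUnique {t : PB} (ht : t ≠ leaf) :
    t.mirror = t ↔ ∃! s, t = node s s.mirror := by
  refine ⟨fun h => ⟨t.left, ?_, ?_⟩, fun ⟨s, hs, _⟩ => hs ▸ mirror_node_mirror s⟩
  · exact (eq_node_left_mirror_of_mirror_eq h).resolve_left ht
  · rintro s rfl
    rfl

def toBinaryTree : PB → BinaryTree Unit
  | leaf => .nil
  | node l r => .node () l.toBinaryTree r.toBinaryTree

def ofBinaryTree : BinaryTree Unit → PB
  | .nil => leaf
  | .node _ l r => node (ofBinaryTree l) (ofBinaryTree r)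

def equivBinaryTree : PB ≃ BinaryTree Unit where
  toFun := toBinaryTree
  invFun := ofBinaryTree
  left_inv t := by induction t <;> simp_all [toBinaryTree, ofBinaryTree]
  right_inv t := by induction t <;> simp_all [toBinaryTree, ofBinaryTree]

lemma numNodes_toBinaryTree (t : PB) : t.toBinaryTree.numNodes = t.nodes := by
  induction t <;> simp_all [toBinaryTree, nodes]

lemma card_nodes_eq (n : ℕ) : Nat.card {t : PB // t.nodes = n} = catalan n := by
  have e : {t : PB // t.nodes = n} ≃ (BinaryTree.treesOfNumNodesEq n : Set (BinaryTree Unit)) :=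
    equivBinaryTree.subtypeEquiv fun t => by simp [equivBinaryTree, numNodes_toBinaryTree]
  rw [Nat.card_congr e, Nat.card_coe_set_eq, Set.ncard_coe_finset,
    BinaryTree.treesOfNumNodesEq_card_eq_catalan]

lemma eq_node_left_mirror_of_mirror_eq_of_nodes_eq {t : PB} {n : ℕ} (hm : t.mirror = t)
    (hn : t.nodes = 2 * n + 1) : t = node t.left t.left.mirror ∧ t.left.nodes = n := by
  rcases eq_node_left_mirror_of_mirror_eq hm with rfl | h
  · simp [nodes] at hn
  · refine ⟨h, ?_⟩
    rw [h, nodes_node_mirror] at hn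
    omega

def selfMirrorEquiv (n : ℕ) :
    {t : PB // t.nodes = 2 * n + 1 ∧ t.mirror = t} ≃ {s : PB // s.nodes = n} where
  toFun t := ⟨t.1.left, (eq_node_left_mirror_of_mirror_eq_of_nodes_eq t.2.2 t.2.1).2⟩
  invFun s := ⟨node s.1 s.1.mirror, by rw [nodes_node_mirror, s.2], mirror_node_mirror s.1⟩
  left_inv t := Subtype.ext (eq_node_left_mirror_of_mirror_eq_of_nodes_eq t.2.2 t.2.1).1.symm
  right_inv _ := rfl

end PB

lemma treeOf_name (t : PB) : treeOf t.name = t := by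
  have h : ∃ s : PB, s.name = t.name := ⟨t, rfl⟩
  rw [treeOf, dif_pos h]
  exact PB.name_injective h.choose_spec

lemma dag_name (t : PB) : dag t.name = t.mirror.name := by
  rw [dag, treeOf_name]

lemma dag_name_eq_iff (t : PB) : dag t.name = t.name ↔ t.mirror = t := by
  rw [dag_name, PB.name_injective.eq_iff]

lemma graft_name_dag_name (s : PB) : graft s.name (dag s.name) = (PB.node s s.mirror).name := by
  rw [dag_name, graft, PB.name]

lemma existsUnique_treeName_iff {P : List ℕ → Prop} :
    (∃! w, TreeName w ∧ P w) ↔ ∃! s : PB, P s.name := by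
  constructor
  · rintro ⟨_, ⟨⟨s, rfl⟩, hs⟩, huniq⟩
    exact ⟨s, hs, fun s' hs' => PB.name_injective (huniq _ ⟨⟨s', rfl⟩, hs'⟩)⟩
  · rintro ⟨s, hs, huniq⟩
    exact ⟨s.name, ⟨⟨s, rfl⟩, hs⟩, by rintro _ ⟨⟨s', rfl⟩, hs'⟩; rw [huniq s' hs']⟩

noncomputable def fixedTreeNameEquiv (k : ℕ) :
    {v : List ℕ // TreeName v ∧ v.length = k ∧ dag v = v} ≃
      {t : PB // t.nodes = k ∧ t.mirror = t} where
  toFun v := ⟨treeOf v.1, by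
    obtain ⟨_, ⟨t, rfl⟩, hk, hv⟩ := v
    rw [treeOf_name, ← PB.length_name, hk, ← dag_name_eq_iff, hv]
    exact ⟨rfl, rfl⟩⟩
  invFun t := ⟨t.1.name, ⟨t.1, rfl⟩, by rw [PB.length_name, t.2.1],
    (dag_name_eq_iff t.1).mpr t.2.2⟩
  left_inv v := by
    obtain ⟨_, ⟨t, rfl⟩, _⟩ := v
    simp [treeOf_name]
  right_inv t := by simp [treeOf_name]

/-- A tree name of positive degree is fixed by the dendriform involution iff it is
w ∨ w† for a unique tree name w; there are no fixed tree names of even positive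
degree 2n, and the fixed tree names of degree 2n+1 are counted by the Catalan
number C(n). -/
theorem stmt14 (n : ℕ) :
    (∀ v : List ℕ, TreeName v → v ≠ [] →
      (dag v = v ↔ ∃! w : List ℕ, TreeName w ∧ v = graft w (dag w))) ∧
    (1 ≤ n → {v : List ℕ | TreeName v ∧ v.length = 2 * n ∧ dag v = v} = ∅) ∧
    Nat.card {v : List ℕ // TreeName v ∧ v.length = 2 * n + 1 ∧ dag v = v} = catalan n := by
  refine ⟨?_, fun hn => ?_, ?_⟩
  · rintro v ⟨t, rfl⟩ hne
    have ht : t ≠ PB.leaf := by rintro rfl; exact hne rfl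
    simp only [dag_name_eq_iff, existsUnique_treeName_iff, graft_name_dag_name,
      PB.name_injective.eq_iff, PB.mirror_eq_self_iff_existsUnique ht]
  · refine Set.eq_empty_iff_forall_notMem.mpr fun v hv => ?_
    obtain ⟨t, ht, hm⟩ := fixedTreeNameEquiv (2 * n) ⟨v, hv⟩
    rcases PB.eq_node_left_mirror_of_mirror_eq hm with rfl | h
    · simp [PB.nodes] at ht
      omega
    · rw [h, PB.nodes_node_mirror] at ht
      omega
  · rw [Nat.card_congr ((fixedTreeNameEquiv _).trans (PB.selfMirrorEquiv n)), PB.card_nodes_eq]
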